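/- arXiv:2104.01931 — 4 statements merged into one kernel-verified Lean document; each statement's English description precedes it below -/
import Mathlib

section
/- Let H be an n×n Hermitian complex matrix, B an n×L complex matrix such that H·B = B·M for some L×L complex matrix M, E = B†B Hermitian positive definite, and D = B†HB. Suppose the vectors v_1,…,v_L ∈ ℂ^L and real numbers λ_1,…,λ_L satisfy D v_j = λ_j E v_j for all j and v_i† E v_j = δ_{ij} for all i,j. Then for every real T, exp(−iTH)·B = B·(Σ_{j=1}^L exp(−iλ_j T)·v_j v_j† E). In particular, for any coefficient vector α(0) ∈ ℂ^L, the time-evolved state exp(−iTH)·B·α(0) equals B·α(T) with α(T) = (Σ_j exp(−iλ_j T) v_j v_j† E)·α(0). -/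
open Matrix
open scoped ComplexOrder

/-!
Whenever `A B = B C`, the exponential series give `exp A · B = B · exp C`.
Write `V` for the matrix with columns `v_j` and `Λ = diag λ`. Orthonormality says `Vᴴ E V = 1`,
so `V⁻¹ = Vᴴ E`, and the generalized eigenvalue equations say `D V = E V Λ`, hence
`D = E V Λ V⁻¹`. Projecting `H B = B M` gives `D = E M`, so `Bᴴ B (M - V Λ V⁻¹) = 0`, and since
`xᴴ Bᴴ B x = ‖B x‖²` this forces `H B = B M = B V Λ V⁻¹`. Therefore
`exp(-iTH) B = B V exp(-iTΛ) V⁻¹`, and expanding `V exp(-iTΛ) Vᴴ` column by column gives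
`∑ j, exp(-iλ_j T) v_j v_jᴴ`.
-/

namespace Matrix

open NormedSpace

variable {ι m n R : Type*} [Fintype ι] [DecidableEq ι]

theorem pow_mul_eq_mul_pow_of_mul_eq [Fintype m] [DecidableEq m] [Fintype n] [DecidableEq n]
    [Semiring R] {A : Matrix m m R} {B : Matrix m n R} {C : Matrix n n R} (h : A * B = B * C)
    (k : ℕ) : A ^ k * B = B * C ^ k := by
  induction k with
  | zero => simp
  | succ k ih =>
    rw [pow_succ, pow_succ, Matrix.mul_assoc, h, ← Matrix.mul_assoc, ih, Matrix.mul_assoc]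

open scoped Norms.Operator in
theorem exp_mul_eq_mul_exp_of_mul_eq [Fintype m] [DecidableEq m] [Fintype n] [DecidableEq n]
    {𝕜 : Type*} [RCLike 𝕜] {A : Matrix m m 𝕜} {B : Matrix m n 𝕜} {C : Matrix n n 𝕜}
    (h : A * B = B * C) : exp A * B = B * exp C := by
  have hA : HasSum (fun k => (k.factorial⁻¹ : 𝕜) • A ^ k * B) (exp A * B) :=
    (exp_series_hasSum_exp' A).map (addMonoidHomMulRight B)
      (continuous_id.matrix_mul continuous_const)
  have hC : HasSum (fun k => B * ((k.factorial⁻¹ : 𝕜) • C ^ k)) (B * exp C) :=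
    (exp_series_hasSum_exp' C).map (addMonoidHomMulLeft B)
      (continuous_const.matrix_mul continuous_id)
  refine hA.unique ?_
  simpa only [Matrix.mul_smul, Matrix.smul_mul, pow_mul_eq_mul_pow_of_mul_eq h] using hC

theorem exp_mul_mul_eq_of_mul_eq_one {𝔸 : Type*} [NormedCommRing 𝔸] [NormedAlgebra ℚ 𝔸]
    [CompleteSpace 𝔸] {V W : Matrix ι ι 𝔸} (h : W * V = 1) (A : Matrix ι ι 𝔸) :
    exp (V * A * W) = V * exp A * W := by
  rw [← inv_eq_left_inv h, exp_conj V A (.of_mul_eq_one_right W h)]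

theorem mul_eq_mul_of_conjTranspose_mul_self_mul_eq [Fintype m] [Fintype n] [Ring R]
    [PartialOrder R] [StarRing R] [StarOrderedRing R] [NoZeroDivisors R] {p : Type*}
    (B : Matrix m n R) {X Y : Matrix n p R} (h : Bᴴ * B * X = Bᴴ * B * Y) : B * X = B * Y := by
  rw [← sub_eq_zero, ← Matrix.mul_sub, ← conjTranspose_mul_self_mul_eq_zero, Matrix.mul_sub,
    h, sub_self]

section Columns

variable [CommSemiring R]

theorem conjTranspose_mul_mul_transpose_of_eq_one [StarRing R] {E : Matrix ι ι R}
    {v : ι → ι → R} (h : ∀ i j, star (v i) ⬝ᵥ E *ᵥ v j = if i = j then 1 else 0) :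
    (of v)ᵀᴴ * E * (of v)ᵀ = 1 := by
  ext i j
  exact (mul_mul_apply _ _ _ i j).trans (h i j)

theorem mul_transpose_of_eq_mul_diagonal [Fintype n] {D E : Matrix n n R} {v : ι → n → R}
    {d : ι → R} (h : ∀ j, D *ᵥ v j = d j • E *ᵥ v j) :
    D * (of v)ᵀ = E * (of v)ᵀ * diagonal d := by
  ext i j
  rw [mul_diagonal]
  simpa [mul_apply, mulVec, dotProduct, mul_comm, Finset.mul_sum] using congrFun (h j) i

theorem sum_smul_vecMulVec_star [StarRing R] (c : ι → R) (v : ι → n → R) :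
    ∑ j, c j • vecMulVec (v j) (star (v j)) = (of v)ᵀ * diagonal c * (of v)ᵀᴴ := by
  ext i k
  rw [sum_apply, mul_apply]
  simp only [mul_diagonal, conjTranspose_apply, transpose_apply, of_apply, smul_apply,
    vecMulVec_apply, Pi.star_apply, smul_eq_mul]
  exact Finset.sum_congr rfl fun j _ => by ring

end Columns

theorem sum_exp_smul_vecMulVec_star_mul (d : ι → ℂ) (v : ι → ι → ℂ) (E : Matrix ι ι ℂ) :
    ∑ j, Complex.exp (d j) • (vecMulVec (v j) (star (v j)) * E) =
      (of v)ᵀ * exp (diagonal d) * ((of v)ᵀᴴ * E) := by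
  rw [exp_diagonal, Pi.exp_def, ← Complex.exp_eq_exp_ℂ, ← Matrix.mul_assoc,
    ← sum_smul_vecMulVec_star, Finset.sum_mul]
  simp only [Matrix.smul_mul]

end Matrix

theorem cqff_fast_forwarding_general
    (n L : ℕ) (H : Matrix (Fin n) (Fin n) ℂ)
    (B : Matrix (Fin n) (Fin L) ℂ)
    (M : Matrix (Fin L) (Fin L) ℂ) (hHB : H * B = B * M)
    (E D : Matrix (Fin L) (Fin L) ℂ)
    (hE : E = Bᴴ * B)
    (hD : D = Bᴴ * H * B)
    (v : Fin L → (Fin L → ℂ)) (lam : Fin L → ℝ)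
    (heig : ∀ j, D.mulVec (v j) = (lam j : ℂ) • E.mulVec (v j))
    (horth : ∀ i j, star (v i) ⬝ᵥ E.mulVec (v j) = if i = j then 1 else 0)
    (T : ℝ) :
    NormedSpace.exp ((-(Complex.I * (T : ℂ))) • H) * B =
      B * (∑ j, Complex.exp (-(Complex.I * (lam j : ℂ) * (T : ℂ))) •
            (vecMulVec (v j) (star (v j)) * E)) ∧
    ∀ α₀ : Fin L → ℂ,
      (NormedSpace.exp ((-(Complex.I * (T : ℂ))) • H)).mulVec (B.mulVec α₀) =
        B.mulVec ((∑ j, Complex.exp (-(Complex.I * (lam j : ℂ) * (T : ℂ))) •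
            (vecMulVec (v j) (star (v j)) * E)).mulVec α₀) := by
  set V := (of v)ᵀ
  set Λ := diagonal fun j => (lam j : ℂ)
  set s := -(Complex.I * (T : ℂ))
  have hWV : Vᴴ * E * V = 1 := conjTranspose_mul_mul_transpose_of_eq_one horth
  have hEM : Bᴴ * B * M = Bᴴ * B * (V * Λ * (Vᴴ * E)) := calc
    Bᴴ * B * M = D * (V * (Vᴴ * E)) := by
      rw [mul_eq_one_comm.mp hWV, Matrix.mul_one, hD, Matrix.mul_assoc, ← hHB, Matrix.mul_assoc]
    _ = Bᴴ * B * (V * Λ * (Vᴴ * E)) := by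
      rw [← Matrix.mul_assoc, mul_transpose_of_eq_mul_diagonal heig, ← hE]
      simp only [Matrix.mul_assoc, V, Λ]
  have hsH : s • H * B = B * (V * (s • Λ) * (Vᴴ * E)) := by
    rw [Matrix.smul_mul, hHB, mul_eq_mul_of_conjTranspose_mul_self_mul_eq B hEM]
    simp only [Matrix.mul_smul, Matrix.smul_mul]
  have hsΛ : s • Λ = diagonal fun j => -(Complex.I * (lam j : ℂ) * (T : ℂ)) := by
    rw [← diagonal_smul]
    exact congrArg diagonal (funext fun j => by simp only [s, Pi.smul_apply, smul_eq_mul]; ring)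
  have hmain : NormedSpace.exp (s • H) * B = B * (∑ j, Complex.exp
      (-(Complex.I * (lam j : ℂ) * (T : ℂ))) • (vecMulVec (v j) (star (v j)) * E)) := by
    rw [exp_mul_eq_mul_exp_of_mul_eq hsH, exp_mul_mul_eq_of_mul_eq_one hWV, hsΛ,
      sum_exp_smul_vecMulVec_star_mul]
  exact ⟨hmain, fun α₀ => by rw [mulVec_mulVec, hmain, ← mulVec_mulVec]⟩

/-- Correctness of the CQFF fast-forwarded evolution: if `H B = B M`, `E = Bᴴ B` is
positive definite, `D = Bᴴ H B`, and `(λ j, v j)` solve the generalized eigenvalue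
problem `D v = λ E v` with `E`-orthonormal eigenvectors, then
`exp(-iTH) B = B (∑ j, exp(-i λ_j T) v_j v_jᴴ E)`, and consequently
`exp(-iTH) B α(0) = B α(T)` with `α(T) = (∑ j, exp(-i λ_j T) v_j v_jᴴ E) α(0)`. -/
theorem cqff_fast_forwarding
    (n L : ℕ) (H : Matrix (Fin n) (Fin n) ℂ) (hH : H.IsHermitian)
    (B : Matrix (Fin n) (Fin L) ℂ)
    (M : Matrix (Fin L) (Fin L) ℂ) (hHB : H * B = B * M)
    (E D : Matrix (Fin L) (Fin L) ℂ)
    (hE : E = Bᴴ * B) (hEpd : E.PosDef)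
    (hD : D = Bᴴ * H * B)
    (v : Fin L → (Fin L → ℂ)) (lam : Fin L → ℝ)
    (heig : ∀ j, D.mulVec (v j) = (lam j : ℂ) • E.mulVec (v j))
    (horth : ∀ i j, star (v i) ⬝ᵥ E.mulVec (v j) = if i = j then 1 else 0)
    (T : ℝ) :
    NormedSpace.exp ((-(Complex.I * (T : ℂ))) • H) * B =
      B * (∑ j, Complex.exp (-(Complex.I * (lam j : ℂ) * (T : ℂ))) •
            (vecMulVec (v j) (star (v j)) * E)) ∧
    ∀ α₀ : Fin L → ℂ,
      (NormedSpace.exp ((-(Complex.I * (T : ℂ))) • H)).mulVec (B.mulVec α₀) =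
        B.mulVec ((∑ j, Complex.exp (-(Complex.I * (lam j : ℂ) * (T : ℂ))) •
            (vecMulVec (v j) (star (v j)) * E)).mulVec α₀) :=
  cqff_fast_forwarding_general n L H B M hHB E D hE hD v lam heig horth T
end

section
/- Let E be an L×L Hermitian positive definite complex matrix, v_1,…,v_L ∈ ℂ^L with v_i† E v_j = δ_{ij} for all i,j, and λ_1,…,λ_L real. Define M = Σ_{j=1}^L λ_j v_j v_j† E. Then for every real Δt and every natural number N, (𝟙 − iΔt·M)^N = Σ_{j=1}^L (1 − iλ_jΔt)^N v_j v_j† E. -/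
/-!
The matrices `P j = v j (v j)ᴴ E` form a complete family of orthogonal idempotents:
`E`-orthonormality gives `P i * P j = δᵢⱼ P i`, and it says that `Vᴴ E` is a left inverse of the
square matrix `V` with columns `v j`, hence also a right inverse, which is `∑ j, P j = 1`.
So `1 - iΔt M = ∑ j, (1 - iλⱼΔt) • P j`, and powers of such a combination act coefficientwise.
-/

open Matrix
open scoped ComplexOrder

theorem Matrix.sum_vecMulVec_eq_transpose_mul {R n ι : Type*} [NonUnitalNonAssocSemiring R]
    [Fintype ι] (u w : ι → n → R) :
    ∑ i, vecMulVec (u i) (w i) = (of u)ᵀ * of w := by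
  ext a b
  simp [Matrix.sum_apply, Matrix.mul_apply, vecMulVec_apply]

theorem Matrix.completeOrthogonalIdempotents_vecMulVec {R n : Type*} [Ring R]
    [IsStablyFiniteRing R] [Fintype n] [DecidableEq n] {u w : n → n → R}
    (h : ∀ i j, w i ⬝ᵥ u j = if i = j then 1 else 0) :
    CompleteOrthogonalIdempotents fun i ↦ vecMulVec (u i) (w i) := by
  refine ⟨OrthogonalIdempotents.iff_mul_eq.mpr fun i j ↦ ?_, ?_⟩
  · rw [vecMulVec_mul_vecMulVec, h]
    split_ifs with hij <;> simp [hij]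
  · rw [sum_vecMulVec_eq_transpose_mul, mul_eq_one_comm]
    ext i j
    simpa [Matrix.mul_apply, dotProduct, one_apply] using h i j

theorem OrthogonalIdempotents.sum_smul_mul_sum_smul {R A ι : Type*} [CommSemiring R]
    [Semiring A] [Algebra R A] [Fintype ι] {e : ι → A} (he : OrthogonalIdempotents e)
    (c d : ι → R) :
    (∑ i, c i • e i) * ∑ i, d i • e i = ∑ i, (c i * d i) • e i := by
  classical
  simp [Finset.sum_mul, Finset.mul_sum, he.mul_eq, smul_smul, mul_comm]

theorem CompleteOrthogonalIdempotents.sum_smul_pow {R A ι : Type*} [CommSemiring R]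
    [Semiring A] [Algebra R A] [Fintype ι] {e : ι → A} (he : CompleteOrthogonalIdempotents e)
    (c : ι → R) (n : ℕ) : (∑ i, c i • e i) ^ n = ∑ i, c i ^ n • e i := by
  induction n with
  | zero => simpa using he.complete.symm
  | succ n ih => rw [pow_succ, ih, he.sum_smul_mul_sum_smul]; simp [pow_succ]

theorem cqff_tweaked_fast_forwarding_general
    (L : ℕ) (E : Matrix (Fin L) (Fin L) ℂ)
    (v : Fin L → (Fin L → ℂ)) (lam : Fin L → ℝ)
    (horth : ∀ i j, star (v i) ⬝ᵥ E.mulVec (v j) = if i = j then 1 else 0)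
    (M : Matrix (Fin L) (Fin L) ℂ)
    (hM : M = ∑ j, (lam j : ℂ) • (vecMulVec (v j) (star (v j)) * E))
    (Δt : ℝ) (N : ℕ) :
    ((1 : Matrix (Fin L) (Fin L) ℂ) - (Complex.I * (Δt : ℂ)) • M) ^ N =
      ∑ j, ((1 : ℂ) - Complex.I * (lam j : ℂ) * (Δt : ℂ)) ^ N •
        (vecMulVec (v j) (star (v j)) * E) := by
  have hP : CompleteOrthogonalIdempotents fun j ↦ vecMulVec (v j) (star (v j)) * E := by
    simp only [vecMulVec_mul]
    exact completeOrthogonalIdempotents_vecMulVec fun i j ↦ by rw [← dotProduct_mulVec, horth]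
  have hstep : 1 - (Complex.I * Δt) • M =
      ∑ j, (1 - Complex.I * lam j * Δt) • (vecMulVec (v j) (star (v j)) * E) := by
    rw [hM, ← hP.complete, Finset.smul_sum, ← Finset.sum_sub_distrib]
    refine Finset.sum_congr rfl fun j _ ↦ ?_
    module
  rw [hstep, hP.sum_smul_pow]

/-- Identity underlying the tweaked CQFF algorithm: with
`M = ∑ j, λ_j v_j v_jᴴ E` for an `E`-orthonormal family, for every timestep `Δt`
and every `N`, `(𝟙 - iΔt M)^N = ∑ j, (1 - i λ_j Δt)^N v_j v_jᴴ E`. -/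
theorem cqff_tweaked_fast_forwarding
    (L : ℕ) (E : Matrix (Fin L) (Fin L) ℂ) (hE : E.PosDef)
    (v : Fin L → (Fin L → ℂ)) (lam : Fin L → ℝ)
    (horth : ∀ i j, star (v i) ⬝ᵥ E.mulVec (v j) = if i = j then 1 else 0)
    (M : Matrix (Fin L) (Fin L) ℂ)
    (hM : M = ∑ j, (lam j : ℂ) • (vecMulVec (v j) (star (v j)) * E))
    (Δt : ℝ) (N : ℕ) :
    ((1 : Matrix (Fin L) (Fin L) ℂ) - (Complex.I * (Δt : ℂ)) • M) ^ N =
      ∑ j, ((1 : ℂ) - Complex.I * (lam j : ℂ) * (Δt : ℂ)) ^ N •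
        (vecMulVec (v j) (star (v j)) * E) :=
  cqff_tweaked_fast_forwarding_general L E v lam horth M hM Δt N
end

section
/- Let H be an n×n Hermitian complex matrix of rank r and let φ ∈ ℂ^n. Then for every real t, the vector exp(−itH)·φ lies in the subspace span{φ, Hφ, H²φ, …, H^r φ}. -/
/-!
`H` is annihilated by `X * χ(X)`, where `χ` is the characteristic polynomial of the restriction
of `H` to its range, a polynomial of degree `r`. Hence the algebra generated by `H` is spanned by
`1, H, …, H ^ r`. Being finite-dimensional, this algebra is closed, so it contains `exp (-itH)`.
-/

open Polynomial Module

theorem Module.End.commute_aeval_left_of_commute {R M N : Type*} [CommSemiring R]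
    [AddCommMonoid M] [Module R M] [AddCommMonoid N] [Module R N]
    {f : M →ₗ[R] N} {g : Module.End R M} {g₂ : Module.End R N}
    (h : g₂.comp f = f.comp g) (p : R[X]) : (aeval g₂ p).comp f = f.comp (aeval g p) := by
  induction p using Polynomial.induction_on' with
  | add p q hp hq => simp only [map_add, LinearMap.add_comp, LinearMap.comp_add, hp, hq]
  | monomial n c =>
    simp only [aeval_monomial, Algebra.algebraMap_eq_smul_one, smul_mul_assoc, one_mul,
      LinearMap.smul_comp, LinearMap.comp_smul, Module.End.commute_pow_left_of_commute h]

theorem Module.End.exists_monic_aeval_eq_zero_natDegree_eq_finrank_range_add_one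
    {K V : Type*} [Field K] [AddCommGroup V] [Module K V] [FiniteDimensional K V]
    (f : Module.End K V) :
    ∃ q : K[X], q.Monic ∧ q.natDegree = finrank K (LinearMap.range f) + 1 ∧
      aeval f q = 0 := by
  set s := f.rangeRestrict
  set ι := (LinearMap.range f).subtype
  set g : Module.End K (LinearMap.range f) := s ∘ₗ ι
  have hg : g ∘ₗ s = s ∘ₗ f := rfl
  refine ⟨X * g.charpoly, monic_X.mul g.charpoly_monic, ?_, ?_⟩
  · rw [natDegree_X_mul g.charpoly_monic.ne_zero, g.charpoly_natDegree]
  · calc aeval f (X * g.charpoly) = ι ∘ₗ s ∘ₗ aeval f g.charpoly := by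
          rw [map_mul, aeval_X]; rfl
      _ = ι ∘ₗ aeval g g.charpoly ∘ₗ s := by
          rw [Module.End.commute_aeval_left_of_commute hg]
      _ = 0 := by rw [LinearMap.aeval_self_charpoly]; simp

theorem Algebra.adjoin_singleton_le_span_pow_of_aeval_eq_zero {K A : Type*} [Field K] [Ring A]
    [Algebra K A] {a : A} {q : K[X]} (hq : q.Monic) (hqa : aeval a q = 0) :
    Subalgebra.toSubmodule (Algebra.adjoin K {a}) ≤
      Submodule.span K ((a ^ ·) '' Set.Iio q.natDegree) := by
  intro x hx
  rw [Subalgebra.mem_toSubmodule, Algebra.adjoin_singleton_eq_range_aeval] at hx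
  obtain ⟨p, rfl⟩ := hx
  change aeval a p ∈ _
  rw [← aeval_modByMonic_eq_self_of_root hqa, aeval_eq_sum_range]
  refine Submodule.sum_mem _ fun i _ => ?_
  by_cases hi : i < q.natDegree
  · exact Submodule.smul_mem _ _ (Submodule.subset_span ⟨i, hi, rfl⟩)
  · have hdeg : (p %ₘ q).degree < i := (degree_modByMonic_lt p hq).trans_le <|
      degree_le_natDegree.trans (by exact_mod_cast not_lt.1 hi)
    rw [coeff_eq_zero_of_degree_lt hdeg, zero_smul]
    exact Submodule.zero_mem _

theorem Matrix.exists_monic_aeval_eq_zero_natDegree_eq_rank_add_one {n K : Type*} [Fintype n]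
    [DecidableEq n] [Field K] (H : Matrix n n K) :
    ∃ q : K[X], q.Monic ∧ q.natDegree = H.rank + 1 ∧ aeval H q = 0 := by
  obtain ⟨q, hq, hdeg, hHq⟩ :=
    Module.End.exists_monic_aeval_eq_zero_natDegree_eq_finrank_range_add_one
      (Matrix.toLinAlgEquiv' H)
  refine ⟨q, hq, hdeg, (Matrix.toLinAlgEquiv' (R := K)).injective ?_⟩
  rw [← aeval_algHom_apply, hHq, map_zero]

theorem Matrix.exp_mem_subalgebra {m 𝕜 : Type*} [Fintype m] [DecidableEq m] [RCLike 𝕜]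
    {S : Subalgebra 𝕜 (Matrix m m 𝕜)} {A : Matrix m m 𝕜} (hA : A ∈ S) : NormedSpace.exp A ∈ S :=
  NormedSpace.exp_mem (R := 𝕜) (s := S)
    (Submodule.closed_of_finiteDimensional (Subalgebra.toSubmodule S)) hA

theorem time_evolution_mem_krylov_of_rank_general
    (n r : ℕ) (H : Matrix (Fin n) (Fin n) ℂ)
    (hrank : H.rank = r)
    (φ : Fin n → ℂ) (t : ℝ) :
    (NormedSpace.exp ((-(Complex.I * (t : ℂ))) • H)).mulVec φ ∈
      Submodule.span ℂ {w | ∃ k : ℕ, k ≤ r ∧ w = (H ^ k).mulVec φ} := by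
  obtain ⟨q, hq, hdeg, hHq⟩ := H.exists_monic_aeval_eq_zero_natDegree_eq_rank_add_one
  have hgen : (-(Complex.I * (t : ℂ))) • H ∈ Algebra.adjoin ℂ {H} :=
    Subalgebra.smul_mem _ (Algebra.self_mem_adjoin_singleton ℂ H) _
  have hexp : NormedSpace.exp ((-(Complex.I * (t : ℂ))) • H) ∈
      Submodule.span ℂ ((H ^ ·) '' Set.Iio (r + 1)) := by
    rw [← hrank, ← hdeg]
    exact Algebra.adjoin_singleton_le_span_pow_of_aeval_eq_zero hq hHq
      (Matrix.exp_mem_subalgebra hgen)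
  refine Submodule.span_mono ?_
    (Submodule.apply_mem_span_image_of_mem_span ((Matrix.mulVecBilin ℂ ℂ).flip φ) hexp)
  rintro _ ⟨_, ⟨k, hk, rfl⟩, rfl⟩
  exact ⟨k, Nat.lt_succ_iff.1 hk, rfl⟩

/-- For a Hermitian matrix `H` of rank `r`, the time evolution `exp(-itH) φ`
lies in the Krylov subspace `span{φ, Hφ, …, H^r φ}` for every real `t`. -/
theorem time_evolution_mem_krylov_of_rank
    (n r : ℕ) (H : Matrix (Fin n) (Fin n) ℂ)
    (hH : H.IsHermitian) (hrank : H.rank = r)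
    (φ : Fin n → ℂ) (t : ℝ) :
    (NormedSpace.exp ((-(Complex.I * (t : ℂ))) • H)).mulVec φ ∈
      Submodule.span ℂ {w | ∃ k : ℕ, k ≤ r ∧ w = (H ^ k).mulVec φ} :=
  time_evolution_mem_krylov_of_rank_general n r H hrank φ t
end

section
/- Let A and Ã be n×n Hermitian complex matrices. Let V_0 be an n×l complex matrix whose columns are orthonormal, Λ_0 an l×l real diagonal matrix with A V_0 = V_0 Λ_0 and all diagonal entries of Λ_0 contained in the open interval (a,b). Let Ṽ_1 be an n×m complex matrix whose columns are orthonormal, Λ̃_1 an m×m real diagonal matrix with Ã Ṽ_1 = Ṽ_1 Λ̃_1 and all diagonal entries of Λ̃_1 lying outside the interval (a−δ, b+δ), where δ > 0. Then δ · ‖V_0† Ṽ_1‖ ≤ ‖V_0† (Ã − A) Ṽ_1‖, where ‖·‖ denotes the spectral (operator) norm. -/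
/-!
Write `S = V₀ᴴ Ṽ₁` and `c = (a + b) / 2`. The two eigen-equations, together with `A = Aᴴ`, turn
`V₀ᴴ (Ã − A) Ṽ₁` into the Sylvester expression `S Λ̃₁ − Λ₀ S = S (Λ̃₁ − c) − (Λ₀ − c) S`.
If `r` is the largest `|μᵢ − c|`, every `|νⱼ − c|` is at least `r + δ`, so inverting the
diagonal `Λ̃₁ − c` shows `‖S (Λ̃₁ − c)‖ ≥ (r + δ) ‖S‖`, while `‖(Λ₀ − c) S‖ ≤ r ‖S‖`; the
reverse triangle inequality leaves `δ ‖S‖`.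
-/

open Matrix

/-- The spectral (operator) norm of a complex matrix, i.e. the operator norm of the
induced linear map between Euclidean spaces (equal to the largest singular value). -/
noncomputable def spectralNorm' {p q : ℕ} (M : Matrix (Fin p) (Fin q) ℂ) : ℝ :=
  ‖LinearMap.toContinuousLinearMap (Matrix.toEuclideanLin M)‖

open scoped Matrix.Norms.L2Operator

lemma spectralNorm'_eq_l2_opNorm {p q : ℕ} (M : Matrix (Fin p) (Fin q) ℂ) :
    spectralNorm' M = ‖M‖ := rfl

lemma abs_sub_midpoint_add_le {a b δ x y : ℝ} (hx : x ∈ Set.Ioo a b)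
    (hy : y ∉ Set.Ioo (a - δ) (b + δ)) : |x - (a + b) / 2| + δ ≤ |y - (a + b) / 2| := by
  obtain ⟨hax, hxb⟩ := hx
  rw [Set.mem_Ioo, not_and_or, not_lt, not_lt] at hy
  have hx' : |x - (a + b) / 2| ≤ (b - a) / 2 := abs_le.mpr ⟨by linarith, by linarith⟩
  rcases hy with hy | hy
  · linarith [neg_abs_le (y - (a + b) / 2)]
  · linarith [le_abs_self (y - (a + b) / 2)]

namespace Matrix

variable {𝕜 : Type*} [RCLike 𝕜] {l m n : Type*} [Fintype l] [Fintype m] [Fintype n]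
  [DecidableEq m]

lemma IsHermitian.conjTranspose_mul_eq_diagonal_mul [DecidableEq l] {A : Matrix n n 𝕜}
    (hA : A.IsHermitian) {V : Matrix n l 𝕜} {μ : l → ℝ}
    (hAV : A * V = V * diagonal (fun i => (μ i : 𝕜))) :
    Vᴴ * A = diagonal (fun i => (μ i : 𝕜)) * Vᴴ := by
  calc Vᴴ * A = (A * V)ᴴ := by rw [conjTranspose_mul, hA.eq]
    _ = diagonal (fun i => (μ i : 𝕜)) * Vᴴ := by
      rw [hAV, conjTranspose_mul, diagonal_conjTranspose]
      simp [Pi.star_def]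

lemma le_l2_opNorm_mul_diagonal (S : Matrix l m 𝕜) {d : m → 𝕜} {β : ℝ}
    (hd : ∀ j, β ≤ ‖d j‖) : β * ‖S‖ ≤ ‖S * diagonal d‖ := by
  rcases le_or_gt β 0 with hβ | hβ
  · exact (mul_nonpos_of_nonpos_of_nonneg hβ (norm_nonneg S)).trans (norm_nonneg _)
  have hd₀ : ∀ j, d j ≠ 0 := fun j => norm_pos_iff.mp (hβ.trans_le (hd j))
  have hinv : ‖d⁻¹‖ ≤ β⁻¹ := (pi_norm_le_iff_of_nonneg (by positivity)).mpr fun j => by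
    rw [Pi.inv_apply, norm_inv]
    exact inv_anti₀ hβ (hd j)
  have hcancel : diagonal d * diagonal d⁻¹ = 1 := by
    rw [diagonal_mul_diagonal, ← diagonal_one]
    exact congrArg diagonal (funext fun j => mul_inv_cancel₀ (hd₀ j))
  have hS : ‖S‖ ≤ ‖S * diagonal d‖ * β⁻¹ :=
    calc ‖S‖ = ‖S * diagonal d * diagonal d⁻¹‖ := by
          rw [Matrix.mul_assoc, hcancel, Matrix.mul_one]
      _ ≤ ‖S * diagonal d‖ * ‖d⁻¹‖ := by
        rw [← l2_opNorm_diagonal]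
        exact l2_opNorm_mul _ _
      _ ≤ ‖S * diagonal d‖ * β⁻¹ := by gcongr
  rwa [← le_div_iff₀' hβ, div_eq_mul_inv]

lemma mul_l2_opNorm_le_l2_opNorm_mul_diagonal_sub_diagonal_mul [DecidableEq l]
    (S : Matrix l m 𝕜) (μ : l → 𝕜) (ν : m → 𝕜) (c : 𝕜) {δ : ℝ}
    (hsep : ∀ i j, ‖μ i - c‖ + δ ≤ ‖ν j - c‖) :
    δ * ‖S‖ ≤ ‖S * diagonal ν - diagonal μ * S‖ := by
  rcases isEmpty_or_nonempty l with hl | ⟨⟨i₀⟩⟩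
  · simp [Subsingleton.elim S 0]
  set r := ‖fun i => μ i - c‖
  have hshift : S * diagonal ν - diagonal μ * S =
      S * diagonal (fun j => ν j - c) - diagonal (fun i => μ i - c) * S := by
    ext i j
    simp only [sub_apply, mul_diagonal, diagonal_mul]
    ring
  have hν : (r + δ) * ‖S‖ ≤ ‖S * diagonal (fun j => ν j - c)‖ :=
    le_l2_opNorm_mul_diagonal S fun j => by
      have hr : r ≤ ‖ν j - c‖ - δ :=
        (pi_norm_le_iff_of_nonneg (by linarith [hsep i₀ j, norm_nonneg (μ i₀ - c)])).mpr
          fun i => by linarith [hsep i j]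
      linarith
  have hμ : ‖diagonal (fun i => μ i - c) * S‖ ≤ r * ‖S‖ :=
    (l2_opNorm_mul _ _).trans_eq (by rw [l2_opNorm_diagonal])
  rw [hshift]
  linarith [norm_sub_norm_le (S * diagonal (fun j => ν j - c)) (diagonal (fun i => μ i - c) * S)]

end Matrix

theorem davis_kahan_sin_theta_general
    (n l m : ℕ) (A At : Matrix (Fin n) (Fin n) ℂ)
    (hA : A.IsHermitian)
    (V₀ : Matrix (Fin n) (Fin l) ℂ) (μ : Fin l → ℝ)
    (hAV₀ : A * V₀ = V₀ * Matrix.diagonal (fun i => (μ i : ℂ)))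
    (a b δ : ℝ)
    (hμ : ∀ i, μ i ∈ Set.Ioo a b)
    (Vt₁ : Matrix (Fin n) (Fin m) ℂ) (ν : Fin m → ℝ)
    (hAtVt₁ : At * Vt₁ = Vt₁ * Matrix.diagonal (fun i => (ν i : ℂ)))
    (hν : ∀ i, ν i ∉ Set.Ioo (a - δ) (b + δ)) :
    δ * spectralNorm' (V₀ᴴ * Vt₁) ≤ spectralNorm' (V₀ᴴ * (At - A) * Vt₁) := by
  have hsylvester : V₀ᴴ * (At - A) * Vt₁ = V₀ᴴ * Vt₁ * diagonal (fun j => (ν j : ℂ)) -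
      diagonal (fun i => (μ i : ℂ)) * (V₀ᴴ * Vt₁) := by
    rw [Matrix.mul_sub, Matrix.sub_mul, hA.conjTranspose_mul_eq_diagonal_mul hAV₀,
      Matrix.mul_assoc, hAtVt₁]
    simp only [Matrix.mul_assoc, RCLike.ofReal_eq_complex_ofReal]
  rw [spectralNorm'_eq_l2_opNorm, spectralNorm'_eq_l2_opNorm, hsylvester]
  refine mul_l2_opNorm_le_l2_opNorm_mul_diagonal_sub_diagonal_mul _ _ _ (((a + b) / 2 : ℝ) : ℂ)
    fun i j => ?_
  simp only [← Complex.ofReal_sub, Complex.norm_real, Real.norm_eq_abs]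
  exact abs_sub_midpoint_add_le (hμ i) (hν j)

/-- Davis–Kahan `sin Θ` theorem (operator-norm version): if `A V₀ = V₀ Λ₀` with
`V₀` having orthonormal columns and the eigenvalues in `Λ₀` contained in `(a, b)`,
and `Ã Ṽ₁ = Ṽ₁ Λ̃₁` with `Ṽ₁` having orthonormal columns and the eigenvalues in
`Λ̃₁` excluded from `(a − δ, b + δ)` for some `δ > 0`, then
`δ ‖V₀ᴴ Ṽ₁‖ ≤ ‖V₀ᴴ (Ã − A) Ṽ₁‖` in the spectral norm. -/
theorem davis_kahan_sin_theta
    (n l m : ℕ) (A At : Matrix (Fin n) (Fin n) ℂ)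
    (hA : A.IsHermitian) (hAt : At.IsHermitian)
    (V₀ : Matrix (Fin n) (Fin l) ℂ) (μ : Fin l → ℝ)
    (hV₀ : V₀ᴴ * V₀ = 1)
    (hAV₀ : A * V₀ = V₀ * Matrix.diagonal (fun i => (μ i : ℂ)))
    (a b δ : ℝ) (hδ : 0 < δ)
    (hμ : ∀ i, μ i ∈ Set.Ioo a b)
    (Vt₁ : Matrix (Fin n) (Fin m) ℂ) (ν : Fin m → ℝ)
    (hVt₁ : Vt₁ᴴ * Vt₁ = 1)
    (hAtVt₁ : At * Vt₁ = Vt₁ * Matrix.diagonal (fun i => (ν i : ℂ)))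
    (hν : ∀ i, ν i ∉ Set.Ioo (a - δ) (b + δ)) :
    δ * spectralNorm' (V₀ᴴ * Vt₁) ≤ spectralNorm' (V₀ᴴ * (At - A) * Vt₁) :=
  davis_kahan_sin_theta_general n l m A At hA V₀ μ hAV₀ a b δ hμ Vt₁ ν hAtVt₁ hν
end
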